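/- arXiv:math/0007128 — 3 statements merged into one kernel-verified Lean document; each statement's English description precedes it below -/
import Mathlib

section
/- For any real r > 0, the only elements of SO(3) that fix the polynomial h(x,y,z) = r·z(2z² − 3x² − 3y²) under the pullback action are the rotations about the z-axis; that is, the stabilizer of h in SO(3) equals the subgroup SO(2) of rotations fixing the z-axis. -/
/-!
Writing `h(v) = r (5 z³ − 3 z |v|²)`, `h` depends only on `⟨v, e₃⟩` and `|v|²`, so every orthogonal
`A` fixing `e₃` stabilizes it. Conversely, if `A` stabilizes `h` then `h (A e₃) = h e₃ = 2r`; on the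
unit sphere `5 z³ − 3 z = 2` factors as `(z − 1)(5 z² + 5 z + 2) = 0`, whose second factor has no real
root, so `A e₃` is the north pole `e₃`.
-/

open Matrix

section Orthogonal

variable {n R : Type*} [Fintype n] [CommSemiring R]

theorem dotProduct_mulVec_self_of_transpose_mul_self [DecidableEq n] {A : Matrix n n R}
    (hA : Aᵀ * A = 1) (v : n → R) : A *ᵥ v ⬝ᵥ A *ᵥ v = v ⬝ᵥ v := by
  rw [dotProduct_mulVec, ← mulVec_transpose, mulVec_mulVec, hA, one_mulVec]

theorem transpose_mulVec_dotProduct_of_mulVec_eq {A : Matrix n n R} {e : n → R}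
    (he : A *ᵥ e = e) (v : n → R) : Aᵀ *ᵥ v ⬝ᵥ e = v ⬝ᵥ e := by
  rw [mulVec_transpose, ← dotProduct_mulVec, he]

end Orthogonal

def zonalCubic (r : ℝ) (v : Fin 3 → ℝ) : ℝ :=
  r * v 2 * (2 * v 2 ^ 2 - 3 * v 0 ^ 2 - 3 * v 1 ^ 2)

theorem dotProduct_northPole (v : Fin 3 → ℝ) : v ⬝ᵥ ![0, 0, 1] = v 2 := by
  simp [dotProduct, Fin.sum_univ_three]

theorem zonalCubic_eq (r : ℝ) (v : Fin 3 → ℝ) :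
    zonalCubic r v =
      r * (5 * (v ⬝ᵥ ![0, 0, 1]) ^ 3 - 3 * (v ⬝ᵥ ![0, 0, 1]) * (v ⬝ᵥ v)) := by
  rw [dotProduct_northPole, zonalCubic]
  simp only [dotProduct, Fin.sum_univ_three]
  ring

theorem zonalCubic_northPole (r : ℝ) : zonalCubic r ![0, 0, 1] = 2 * r := by
  simp only [zonalCubic, cons_val, cons_val_zero, cons_val_one]
  ring

theorem eq_northPole_of_zonalCubic_eq {r : ℝ} (hr : r ≠ 0) {v : Fin 3 → ℝ}
    (hv : v ⬝ᵥ v = 1) (h : zonalCubic r v = 2 * r) : v = ![0, 0, 1] := by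
  rw [zonalCubic_eq, hv, dotProduct_northPole] at h
  have hv' : v 0 ^ 2 + v 1 ^ 2 + v 2 ^ 2 = 1 := by
    simpa [dotProduct, Fin.sum_univ_three, sq] using hv
  have hfactor : (v 2 - 1) * (5 * v 2 ^ 2 + 5 * v 2 + 2) = 0 := by
    linear_combination mul_left_cancel₀ hr (h.trans (mul_comm 2 r))
  have hz : v 2 = 1 := by
    have hpos : 0 < 5 * v 2 ^ 2 + 5 * v 2 + 2 := by nlinarith [sq_nonneg (2 * v 2 + 1)]
    linarith [(mul_eq_zero.mp hfactor).resolve_right hpos.ne']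
  have hx : v 0 = 0 := by nlinarith [sq_nonneg (v 0), sq_nonneg (v 1)]
  have hy : v 1 = 0 := by nlinarith [sq_nonneg (v 0), sq_nonneg (v 1)]
  ext i
  fin_cases i <;> simp [hx, hy, hz]

theorem stabilizer_so2_general (r : ℝ) (hr : 0 < r)
    (A : Matrix (Fin 3) (Fin 3) ℝ) (hA : A * Aᵀ = 1) :
    (∀ v : Fin 3 → ℝ,
        r * (A⁻¹.mulVec v 2) *
            (2 * (A⁻¹.mulVec v 2) ^ 2 - 3 * (A⁻¹.mulVec v 0) ^ 2 - 3 * (A⁻¹.mulVec v 1) ^ 2) =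
          r * v 2 * (2 * (v 2) ^ 2 - 3 * (v 0) ^ 2 - 3 * (v 1) ^ 2)) ↔
      A.mulVec ![0, 0, 1] = ![0, 0, 1] := by
  have hAtA : Aᵀ * A = 1 := mul_eq_one_comm.mp hA
  change (∀ v, zonalCubic r (A⁻¹ *ᵥ v) = zonalCubic r v) ↔ _
  rw [inv_eq_right_inv hA]
  constructor
  · intro hstab
    have hpole := hstab (A *ᵥ ![0, 0, 1])
    rw [mulVec_mulVec, hAtA, one_mulVec, zonalCubic_northPole] at hpole
    refine eq_northPole_of_zonalCubic_eq hr.ne' ?_ hpole.symm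
    rw [dotProduct_mulVec_self_of_transpose_mul_self hAtA]
    simp [dotProduct, Fin.sum_univ_three]
  · intro hfix v
    have hAt : Aᵀᵀ * Aᵀ = 1 := by rwa [transpose_transpose]
    rw [zonalCubic_eq, zonalCubic_eq, transpose_mulVec_dotProduct_of_mulVec_eq hfix,
      dotProduct_mulVec_self_of_transpose_mul_self hAt]

/-- The stabilizer in SO(3) of h = r·z(2z² − 3x² − 3y²) (r > 0), acting by pullback,
consists exactly of the rotations about the z-axis. -/
theorem stabilizer_so2 (r : ℝ) (hr : 0 < r)
    (A : Matrix (Fin 3) (Fin 3) ℝ) (hA : A * Aᵀ = 1) (hdet : A.det = 1) :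
    (∀ v : Fin 3 → ℝ,
        r * (A⁻¹.mulVec v 2) *
            (2 * (A⁻¹.mulVec v 2) ^ 2 - 3 * (A⁻¹.mulVec v 0) ^ 2 - 3 * (A⁻¹.mulVec v 1) ^ 2) =
          r * v 2 * (2 * (v 2) ^ 2 - 3 * (v 0) ^ 2 - 3 * (v 1) ^ 2)) ↔
      A.mulVec ![0, 0, 1] = ![0, 0, 1] :=
  stabilizer_so2_general r hr A hA
end

section
/- For real r, s > 0 with s ≠ r√2, the polynomial h = r·z(2z² − 3x² − 3y²) + s·(x³ − 3xy²) has no linear factor; i.e., h is not divisible by any nonzero linear form on ℝ³. -/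
/-!
A linear factor makes the cubic vanish on the plane `a x + b y + c z = 0`. That plane cannot
contain `(0, 0, 1)`, where the cubic equals `2 r`, so `c ≠ 0` and the plane is parametrised by
`(c x, c y, -(a x + b y))`. Along it the cubic becomes a binary cubic in `x, y` that vanishes
identically; its four coefficient equations force `s² = 2 r²`, i.e. `s = r √2`.
-/

open MvPolynomial

section

variable {K : Type*} [Field K] [CharZero K]

theorem binary_cubic_coeffs_eq_zero {A B C D : K}
    (h : ∀ x y : K, A * x ^ 3 + B * x ^ 2 * y + C * x * y ^ 2 + D * y ^ 3 = 0) :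
    A = 0 ∧ B = 0 ∧ C = 0 ∧ D = 0 := by
  have hA : A = 0 := by simpa using h 1 0
  have hD : D = 0 := by simpa using h 0 1
  have hBC : B + C = 0 := by linear_combination h 1 1 - hA - hD
  have hC : (2 : K) * C = 0 := by linear_combination h 1 (-1) - hA + hD + hBC
  have hC : C = 0 := by simpa using hC
  exact ⟨hA, by linear_combination hBC - hC, hC, hD⟩

def cubicForm (r s x y z : K) : K :=
  r * (z * (2 * z ^ 2 - 3 * x ^ 2 - 3 * y ^ 2)) + s * (x ^ 3 - 3 * x * y ^ 2)

variable {r s a b c : K}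

theorem sq_eq_two_mul_sq_of_coeffs (hr : r ≠ 0) (hs : s ≠ 0) (hc : c ≠ 0)
    (hA : s * c ^ 3 - r * a * (2 * a ^ 2 - 3 * c ^ 2) = 0)
    (hB : r * b * (2 * a ^ 2 - c ^ 2) = 0)
    (hC : r * a * (2 * b ^ 2 - c ^ 2) + s * c ^ 3 = 0)
    (hD : r * b * (2 * b ^ 2 - 3 * c ^ 2) = 0) :
    s ^ 2 = 2 * r ^ 2 := by
  have hc2 : c ^ 2 ≠ 0 := pow_ne_zero 2 hc
  rcases eq_or_ne b 0 with rfl | hb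
  · have hsc : s * c = r * a := mul_left_cancel₀ hc2 (by linear_combination hC)
    have ha : a ≠ 0 := by
      rintro rfl
      simp_all
    have ha2 : a ^ 2 = 2 * c ^ 2 := by
      have h : r * a * (a ^ 2 - 2 * c ^ 2) = 0 := by linear_combination (-hA + c ^ 2 * hsc) / 2
      simpa [hr, ha, sub_eq_zero] using h
    exact mul_left_cancel₀ hc2 (by linear_combination (s * c + r * a) * hsc + r ^ 2 * ha2)
  · have hac : 2 * a ^ 2 = c ^ 2 := by simpa [hr, hb, sub_eq_zero] using hB
    have hbc : 2 * b ^ 2 = 3 * c ^ 2 := by simpa [hr, hb, sub_eq_zero] using hD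
    have hsc : s * c = -2 * r * a := mul_left_cancel₀ hc2 (by linear_combination hC - r * a * hbc)
    exact mul_left_cancel₀ hc2 (by linear_combination (s * c - 2 * r * a) * hsc + 2 * r ^ 2 * hac)

theorem sq_eq_two_mul_sq_of_cubicForm_vanishes_on_plane (hr : r ≠ 0) (hs : s ≠ 0) (hc : c ≠ 0)
    (h : ∀ x y z, a * x + b * y + c * z = 0 → cubicForm r s x y z = 0) :
    s ^ 2 = 2 * r ^ 2 := by
  obtain ⟨hA, hB, hC, hD⟩ := binary_cubic_coeffs_eq_zero
    (A := s * c ^ 3 - r * a * (2 * a ^ 2 - 3 * c ^ 2)) (B := -3 * (r * b * (2 * a ^ 2 - c ^ 2)))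
    (C := -3 * (r * a * (2 * b ^ 2 - c ^ 2) + s * c ^ 3)) (D := -(r * b * (2 * b ^ 2 - 3 * c ^ 2)))
    fun x y => by
      rw [← h (c * x) (c * y) (-(a * x + b * y)) (by ring), cubicForm]
      ring
  exact sq_eq_two_mul_sq_of_coeffs hr hs hc hA (by simpa using hB) (by simpa using hC)
    (by simpa using hD)

end

/-- For r, s > 0 with s ≠ r√2, the cubic r·z(2z²−3x²−3y²) + s·(x³−3xy²) has no
real linear factor. -/
theorem no_linear_factor (r s : ℝ) (hr : 0 < r) (hs : 0 < s)
    (hrs : s ≠ r * Real.sqrt 2) :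
    ∀ a b c : ℝ, (a ≠ 0 ∨ b ≠ 0 ∨ c ≠ 0) →
      ¬ ((C a * X 0 + C b * X 1 + C c * X 2) ∣
          (C r * (X 2 * (2 * X 2 ^ 2 - 3 * X 0 ^ 2 - 3 * X 1 ^ 2)) +
            C s * (X 0 ^ 3 - 3 * X 0 * X 1 ^ 2) : MvPolynomial (Fin 3) ℝ)) := by
  intro a b c _ hdvd
  have hvanish : ∀ x y z, a * x + b * y + c * z = 0 → cubicForm r s x y z = 0 := by
    intro x y z hxyz
    have h := map_dvd (eval ![x, y, z]) hdvd
    simpa [hxyz, cubicForm] using h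
  have hc : c ≠ 0 := by
    rintro rfl
    simpa [cubicForm, hr.ne'] using hvanish 0 0 1 (by ring)
  have hsq := sq_eq_two_mul_sq_of_cubicForm_vanishes_on_plane hr.ne' hs.ne' hc hvanish
  apply hrs
  rw [← Real.sqrt_sq hs.le, hsq, Real.sqrt_mul zero_le_two, Real.sqrt_sq hr.le, mul_comm]
end

section
/- A nonzero harmonic homogeneous cubic h on ℝ³ has a real linear factor if and only if h is fixed by some element of order 2 of SO(3). -/
open MvPolynomial Matrix

/-- The Laplacian on polynomials on ℝ³. -/
noncomputable def polyLaplacian : MvPolynomial (Fin 3) ℝ →ₗ[ℝ] MvPolynomial (Fin 3) ℝ :=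
  ∑ i : Fin 3, ((pderiv i).toLinearMap.comp (pderiv i).toLinearMap)

/-! ### Linear substitution machinery -/

noncomputable def subst (M : Matrix (Fin 3) (Fin 3) ℝ) :
    MvPolynomial (Fin 3) ℝ →ₐ[ℝ] MvPolynomial (Fin 3) ℝ :=
  aeval (fun i => ∑ j, C (M i j) * X j)

theorem subst_C (M : Matrix (Fin 3) (Fin 3) ℝ) (r : ℝ) : subst M (C r) = C r := by
  simp [subst]

theorem subst_X (M : Matrix (Fin 3) (Fin 3) ℝ) (i : Fin 3) :
    subst M (X i) = ∑ j, C (M i j) * X j := by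
  simp [subst]

theorem eval_subst (M : Matrix (Fin 3) (Fin 3) ℝ) (p : MvPolynomial (Fin 3) ℝ)
    (v : Fin 3 → ℝ) : eval v (subst M p) = eval (M.mulVec v) p := by
  induction p using MvPolynomial.induction_on with
  | C a => simp [subst]
  | add p q hp hq => simp [map_add, hp, hq]
  | mul_X p i hp => simp [_root_.map_mul, hp, subst_X, Matrix.mulVec, dotProduct]

theorem subst_subst (M N : Matrix (Fin 3) (Fin 3) ℝ) (p : MvPolynomial (Fin 3) ℝ) :
    subst M (subst N p) = subst (N * M) p := by
  have key : ∀ i, subst M (subst N (X i)) = subst (N * M) (X i) := by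
    intro i
    rw [subst_X, subst_X, map_sum]
    simp only [_root_.map_mul, subst_X, subst_C]
    simp only [Finset.mul_sum, Matrix.mul_apply, map_sum, C_mul]
    rw [Finset.sum_comm]
    refine Finset.sum_congr rfl fun k _ => ?_
    rw [Finset.sum_mul]
    refine Finset.sum_congr rfl fun j _ => ?_
    ring
  induction p using MvPolynomial.induction_on with
  | C a => simp [subst]
  | add p q hp hq => simp [map_add, hp, hq]
  | mul_X p i hp => rw [_root_.map_mul, _root_.map_mul, _root_.map_mul, hp, key]

theorem subst_one (p : MvPolynomial (Fin 3) ℝ) : subst 1 p = p := by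
  induction p using MvPolynomial.induction_on with
  | C a => simp [subst]
  | add p q hp hq => simp [map_add, hp, hq]
  | mul_X p i hp =>
    rw [_root_.map_mul, hp, subst_X]
    congr 1
    simp [Matrix.one_apply, Finset.sum_ite_eq', ite_mul]

theorem polyLaplacian_apply (p : MvPolynomial (Fin 3) ℝ) :
    polyLaplacian p = ∑ i : Fin 3, pderiv i (pderiv i p) := by
  simp [polyLaplacian]

theorem pderiv_subst (M : Matrix (Fin 3) (Fin 3) ℝ) (i : Fin 3) (p : MvPolynomial (Fin 3) ℝ) :
    pderiv i (subst M p) = ∑ k, C (M k i) * subst M (pderiv k p) := by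
  induction p using MvPolynomial.induction_on with
  | C a => simp [subst_C]
  | add p q hp hq => simp only [map_add, hp, hq, mul_add, ← Finset.sum_add_distrib]
  | mul_X p k hp =>
    rw [_root_.map_mul, pderiv_mul, hp, subst_X]
    have hd : pderiv i (∑ j, C (M k j) * X j) = C (M k i) := by
      simp [pderiv_X, Finset.sum_ite_eq', Pi.single_apply]
    rw [hd]
    have : ∀ l, pderiv l (p * X k) = pderiv l p * X k + p * (if k = l then 1 else 0) := by
      intro l
      rw [pderiv_mul, pderiv_X, Pi.single_apply]
    simp only [this]
    rw [← subst_X M k]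
    simp only [_root_.map_add, _root_.map_mul, mul_add, Finset.sum_add_distrib, Finset.sum_mul]
    congr 1
    · exact Finset.sum_congr rfl fun l _ => (mul_assoc _ _ _)
    · simp only [apply_ite (subst M), _root_.map_one, _root_.map_zero, mul_ite, mul_one, mul_zero]
      rw [Finset.sum_ite_eq, if_pos (Finset.mem_univ k)]
      ring

theorem polyLaplacian_subst (M : Matrix (Fin 3) (Fin 3) ℝ) (hM : M * Mᵀ = 1)
    (p : MvPolynomial (Fin 3) ℝ) :
    polyLaplacian (subst M p) = subst M (polyLaplacian p) := by
  simp only [polyLaplacian_apply, pderiv_subst, map_sum, Finset.mul_sum, _root_.map_mul]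
  simp only [pderiv_C_mul]
  rw [Finset.sum_comm]
  have horth : ∀ k l, (∑ i, M k i * M l i) = if k = l then 1 else 0 := by
    intro k l
    have := congrFun (congrFun hM k) l
    simpa [Matrix.mul_apply, Matrix.one_apply] using this
  calc ∑ k, ∑ i, C (M k i) * pderiv i (subst M (pderiv k p))
      = ∑ k, ∑ l, C (∑ i, M k i * M l i) * subst M (pderiv l (pderiv k p)) := by
        refine Finset.sum_congr rfl fun k _ => ?_
        simp only [pderiv_subst, Finset.mul_sum]
        rw [Finset.sum_comm]
        simp only [map_sum, C_mul, Finset.sum_mul]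
        refine Finset.sum_congr rfl fun l _ => ?_
        refine Finset.sum_congr rfl fun i _ => ?_
        ring
    _ = ∑ k, subst M (pderiv k (pderiv k p)) := by
        refine Finset.sum_congr rfl fun k _ => ?_
        simp only [horth]
        simp [Finset.sum_ite_eq, apply_ite C]

theorem subst_isHomogeneous (M : Matrix (Fin 3) (Fin 3) ℝ) {p : MvPolynomial (Fin 3) ℝ} {n : ℕ}
    (hp : p.IsHomogeneous n) : (subst M p).IsHomogeneous n := by
  have := hp.aeval (fun i => ∑ j, C (M i j) * X j)
    (fun i => IsHomogeneous.sum _ _ _ fun j _ => isHomogeneous_C_mul_X _ _)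
  simpa [subst, one_mul] using this

/-! ### Coefficient lemmas -/

theorem coeff_pderiv_monomial (i : Fin 3) (m s : Fin 3 →₀ ℕ) (a : ℝ) :
    coeff m (pderiv i (monomial s a)) =
      (m i + 1 : ℝ) * (if s = m + Finsupp.single i 1 then a else 0) := by
  classical
  rw [pderiv_monomial, coeff_monomial]
  by_cases hs : s = m + Finsupp.single i 1
  · subst hs
    have h1 : m + Finsupp.single i 1 - Finsupp.single i 1 = m := by
      ext j; simp [Finsupp.single_apply]
    rw [if_pos rfl, if_pos h1]
    have h2 : ((m + Finsupp.single i 1 : Fin 3 →₀ ℕ)) i = m i + 1 := by simp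
    rw [h2]; push_cast; ring
  · rw [if_neg hs, mul_zero]
    by_cases h2 : s - Finsupp.single i 1 = m
    · rw [if_pos h2]
      have hsi : s i = 0 := by
        by_contra hne
        have hle : Finsupp.single i 1 ≤ s := by
          rw [Finsupp.single_le_iff]; omega
        exact hs (by rw [← h2]; exact (tsub_add_cancel_of_le hle).symm)
      simp [hsi]
    · rw [if_neg h2]

theorem coeff_pderiv (i : Fin 3) (m : Fin 3 →₀ ℕ) (p : MvPolynomial (Fin 3) ℝ) :
    coeff m (pderiv i p) = (m i + 1 : ℝ) * coeff (m + Finsupp.single i 1) p := by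
  classical
  conv_lhs => rw [p.as_sum]
  conv_rhs => rw [p.as_sum]
  rw [map_sum]
  simp only [MvPolynomial.coeff_sum, coeff_pderiv_monomial, coeff_monomial, Finset.mul_sum]

theorem X_dvd_iff_supp (i : Fin 3) (p : MvPolynomial (Fin 3) ℝ) :
    X i ∣ p ↔ ∀ m ∈ p.support, m i ≠ 0 := by
  classical
  constructor
  · rintro ⟨q, rfl⟩ m hm
    rw [mem_support_iff] at hm
    intro h0
    apply hm
    rw [coeff_X_mul']
    simp [Finsupp.mem_support_iff, h0]
  · intro hs
    conv_rhs => rw [p.as_sum]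
    exact Finset.dvd_sum fun m hm => X_dvd_monomial.mpr (Or.inr (hs m hm))

theorem coeff_eq_zero_of_X2_dvd {p : MvPolynomial (Fin 3) ℝ} (hp : X 2 ∣ p)
    {m : Fin 3 →₀ ℕ} (hm : m 2 = 0) : coeff m p = 0 := by
  by_contra hc
  exact ((X_dvd_iff_supp 2 p).mp hp m (mem_support_iff.mpr hc)) hm

theorem supp_deg {g : MvPolynomial (Fin 3) ℝ} (hhom : g.IsHomogeneous 3) {m : Fin 3 →₀ ℕ}
    (hm : m ∈ g.support) : m 0 + m 1 + m 2 = 3 := by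
  have hdeg : m.degree = 3 := by
    by_contra hne
    exact (mem_support_iff.mp hm) (hhom.coeff_eq_zero hne)
  have : m.degree = m 0 + m 1 + m 2 := by
    rw [Finsupp.degree_apply]
    rw [Finset.sum_subset (Finset.subset_univ m.support)
      (fun i _ hi => Finsupp.notMem_support_iff.mp hi)]
    rw [Fin.sum_univ_three]
  omega

/-! ### The diagonal involution -/

noncomputable def Dmat : Matrix (Fin 3) (Fin 3) ℝ := Matrix.diagonal ![-1, -1, 1]

theorem Dmat_transpose : Dmatᵀ = Dmat := by
  rw [Dmat, Matrix.diagonal_transpose]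

theorem Dmat_mul_Dmat : Dmat * Dmat = 1 := by
  ext i j
  fin_cases i <;> fin_cases j <;>
    simp [Dmat, Matrix.mul_apply, Fin.sum_univ_three, Matrix.diagonal, Matrix.one_apply]

theorem Dmat_det : Dmat.det = 1 := by
  rw [Dmat, Matrix.det_diagonal, Fin.prod_univ_three]
  norm_num
  rfl

theorem mono_expand (m : Fin 3 →₀ ℕ) (a : ℝ) :
    monomial m a = C a * X 0 ^ (m 0) * X 1 ^ (m 1) * X 2 ^ (m 2) := by
  have hm : m = Finsupp.single 0 (m 0) + Finsupp.single 1 (m 1) + Finsupp.single 2 (m 2) := by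
    ext j
    fin_cases j <;> simp [Finsupp.single_apply]
  conv_lhs => rw [hm]
  rw [X_pow_eq_monomial, X_pow_eq_monomial, X_pow_eq_monomial, C_apply,
    monomial_mul, monomial_mul, monomial_mul]
  simp

theorem subst_D_X (i : Fin 3) : subst Dmat (X i) = C (![-1, -1, 1] i) * X i := by
  rw [subst_X]
  rw [Finset.sum_eq_single i]
  · simp [Dmat]
  · intro j _ hj
    simp [Dmat, Matrix.diagonal_apply_ne' _ hj]
  · simp

theorem subst_D_monomial (m : Fin 3 →₀ ℕ) (a : ℝ) :
    subst Dmat (monomial m a) = monomial m ((-1 : ℝ) ^ (m 0 + m 1) * a) := by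
  rw [mono_expand, _root_.map_mul, _root_.map_mul, _root_.map_mul, map_pow, map_pow, map_pow,
    subst_C, subst_D_X, subst_D_X, subst_D_X, mono_expand]
  simp only [Matrix.cons_val_zero, Matrix.cons_val_one, Matrix.head_cons, Matrix.cons_val_two,
    Matrix.tail_cons, C_1, one_mul]
  rw [C_mul, C_pow, pow_add, mul_pow, mul_pow]
  ring

theorem coeff_subst_D (m : Fin 3 →₀ ℕ) (g : MvPolynomial (Fin 3) ℝ) :
    coeff m (subst Dmat g) = (-1 : ℝ) ^ (m 0 + m 1) * coeff m g := by
  classical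
  conv_lhs => rw [g.as_sum]
  rw [map_sum, MvPolynomial.coeff_sum]
  simp only [subst_D_monomial, coeff_monomial]
  rw [Finset.sum_ite_eq' g.support m]
  by_cases hm : m ∈ g.support
  · rw [if_pos hm]
  · rw [if_neg hm, notMem_support_iff.mp hm, mul_zero]

theorem subst_D_eq_self {g : MvPolynomial (Fin 3) ℝ}
    (hpar : ∀ m ∈ g.support, Even (m 0 + m 1)) : subst Dmat g = g := by
  ext m
  rw [coeff_subst_D]
  by_cases hm : m ∈ g.support
  · rw [(hpar m hm).neg_one_pow, one_mul]
  · rw [notMem_support_iff.mp hm, mul_zero]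

theorem parity_of_subst_D {g : MvPolynomial (Fin 3) ℝ} (hg : subst Dmat g = g)
    (m : Fin 3 →₀ ℕ) (hm : m ∈ g.support) : Even (m 0 + m 1) := by
  by_contra hodd
  have := coeff_subst_D m g
  rw [hg, (Nat.not_even_iff_odd.mp hodd).neg_one_pow] at this
  have hc : coeff m g = 0 := by linarith
  exact (mem_support_iff.mp hm) hc

/-! ### The harmonic parity argument -/

theorem harmonic_parity {g : MvPolynomial (Fin 3) ℝ} (hharm : polyLaplacian g = 0)
    (hhom : g.IsHomogeneous 3) (hdvd : X 2 ∣ g) :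
    ∀ m ∈ g.support, Even (m 0 + m 1) := by
  classical
  have hlap : ∀ m' : Fin 3 →₀ ℕ,
      (∑ i : Fin 3, ((m' i : ℝ) + 1) * ((m' i + 1 : ℝ) + 1) *
        coeff (m' + Finsupp.single i 1 + Finsupp.single i 1) g) = 0 := by
    intro m'
    have h0 : coeff m' (polyLaplacian g) = 0 := by rw [hharm]; simp
    rw [polyLaplacian_apply, MvPolynomial.coeff_sum] at h0
    rw [← h0]
    refine Finset.sum_congr rfl fun i _ => ?_
    rw [coeff_pderiv, coeff_pderiv]
    have : ((m' + Finsupp.single i 1 : Fin 3 →₀ ℕ)) i = m' i + 1 := by simp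
    rw [this]
    push_cast
    ring
  -- coefficient of x z² vanishes
  have key : ∀ i0 : Fin 3, i0 = 0 ∨ i0 = 1 →
      coeff (Finsupp.single i0 1 + Finsupp.single 2 2) g = 0 := by
    intro i0 hi0
    have := hlap (Finsupp.single i0 1)
    rw [Fin.sum_univ_three] at this
    have hz0 : coeff (Finsupp.single i0 1 + Finsupp.single 0 1 + Finsupp.single 0 1) g = 0 := by
      apply coeff_eq_zero_of_X2_dvd hdvd
      rcases hi0 with h | h <;> subst h <;> simp [Finsupp.single_apply]
    have hz1 : coeff (Finsupp.single i0 1 + Finsupp.single 1 1 + Finsupp.single 1 1) g = 0 := by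
      apply coeff_eq_zero_of_X2_dvd hdvd
      rcases hi0 with h | h <;> subst h <;> simp [Finsupp.single_apply]
    rw [hz0, hz1] at this
    have h2 : Finsupp.single i0 1 + Finsupp.single 2 1 + Finsupp.single 2 1
        = Finsupp.single i0 1 + Finsupp.single 2 2 := by
      ext j
      simp only [Finsupp.add_apply, Finsupp.single_apply]
      split_ifs <;> omega
    rw [h2] at this
    have hcoe : ((Finsupp.single i0 1 : Fin 3 →₀ ℕ)) 2 = 0 := by
      rcases hi0 with h | h <;> subst h <;> simp [Finsupp.single_apply]
    rw [hcoe] at this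
    push_cast at this
    nlinarith [this]
  intro m hm
  have hdeg := supp_deg hhom hm
  have hm2 : m 2 ≠ 0 := (X_dvd_iff_supp 2 g).mp hdvd m hm
  have hne2 : m 2 ≠ 2 := by
    intro h2
    have h01 : m 0 + m 1 = 1 := by omega
    have : coeff m g = 0 := by
      rcases Nat.eq_zero_or_pos (m 0) with h0 | h0
      · have hm1 : m 1 = 1 := by omega
        have : m = Finsupp.single 1 1 + Finsupp.single 2 2 := by
          ext j; fin_cases j <;> simp [Finsupp.single_apply] <;> omega
        rw [this]
        exact key 1 (Or.inr rfl)
      · have hm0 : m 0 = 1 := by omega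
        have : m = Finsupp.single 0 1 + Finsupp.single 2 2 := by
          ext j; fin_cases j <;> simp [Finsupp.single_apply] <;> omega
        rw [this]
        exact key 0 (Or.inl rfl)
    exact (mem_support_iff.mp hm) this
  have : m 2 = 1 ∨ m 2 = 3 := by omega
  rcases this with h | h <;> [skip; skip] <;>
    · rw [Nat.even_iff]; omega

/-! ### Orthonormal frame -/

theorem exists_row_matrix (n : EuclideanSpace ℝ (Fin 3)) (hn : ∑ i : Fin 3, n i * n i = 1) :
    ∃ R : Matrix (Fin 3) (Fin 3) ℝ, R * Rᵀ = 1 ∧ Rᵀ * R = 1 ∧ (∀ j, R 2 j = n j) := by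
  have hcard : Module.finrank ℝ (EuclideanSpace ℝ (Fin 3)) = Fintype.card (Fin 3) := by
    simp
  have horth : Orthonormal ℝ (({2} : Set (Fin 3)).restrict (fun _ : Fin 3 => n)) := by
    rw [orthonormal_iff_ite]
    intro i j
    have : i = j := Subtype.ext (by
      have hi := i.2; have hj := j.2
      simp only [Set.mem_singleton_iff] at hi hj
      rw [hi, hj])
    subst this
    rw [if_pos rfl]
    rw [PiLp.inner_apply]
    show ∑ x, inner ℝ (n x) (n x) = 1
    simpa [← sq] using hn
  obtain ⟨b, hb⟩ := horth.exists_orthonormalBasis_extension_of_card_eq hcard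
  have hb2 : b 2 = n := hb 2 rfl
  refine ⟨Matrix.of (fun i j => b i j), ?_, ?_, fun j => by simp [hb2]⟩
  · ext i j
    have := orthonormal_iff_ite.mp b.orthonormal i j
    rw [PiLp.inner_apply] at this
    simp only [RCLike.inner_apply, conj_trivial] at this
    simpa [Matrix.mul_apply, Matrix.one_apply, mul_comm] using this
  · rw [mul_eq_one_comm]
    ext i j
    have := orthonormal_iff_ite.mp b.orthonormal i j
    rw [PiLp.inner_apply] at this
    simp only [RCLike.inner_apply, conj_trivial] at this
    simpa [Matrix.mul_apply, Matrix.one_apply, mul_comm] using this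

/-! ### 2×2 rigidity -/

theorem B_eq_D (B : Matrix (Fin 3) (Fin 3) ℝ) (hsym : Bᵀ = B) (hBB : B * B = 1)
    (hdet : B.det = 1) (hB1 : B ≠ 1) (he : ∀ i, B i 2 = if i = 2 then 1 else 0) :
    B = Dmat := by
  have h02 : B 0 2 = 0 := by simpa using he 0
  have h12 : B 1 2 = 0 := by simpa using he 1
  have h22 : B 2 2 = 1 := by simpa using he 2
  have h20 : B 2 0 = 0 := by rw [← congrFun (congrFun hsym 2) 0]; simpa using h02
  have h21 : B 2 1 = 0 := by rw [← congrFun (congrFun hsym 2) 1]; simpa using h12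
  have h10 : B 1 0 = B 0 1 := by rw [← congrFun (congrFun hsym 1) 0]; rfl
  set p := B 0 0 with hp
  set q := B 0 1 with hq
  set s := B 1 1 with hs
  have e00 : p * p + q * q = 1 := by
    have := congrFun (congrFun hBB 0) 0
    rw [Matrix.mul_apply, Fin.sum_univ_three] at this
    simpa [h10, h02, h20, Matrix.one_apply] using this
  have e11 : q * q + s * s = 1 := by
    have := congrFun (congrFun hBB 1) 1
    rw [Matrix.mul_apply, Fin.sum_univ_three] at this
    simpa [h10, h12, h21, Matrix.one_apply, mul_comm] using this
  have edet : p * s - q * q = 1 := by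
    rw [Matrix.det_fin_three] at hdet
    rw [← hdet]
    simp only [← hp, ← hq, ← hs, h02, h12, h22, h20, h21, h10]
    ring
  have hq0 : q = 0 := by nlinarith [sq_nonneg (p*s), sq_nonneg (p-s), sq_nonneg (p+s)]
  have hps : p * s = 1 := by rw [hq0] at edet; linarith
  have hp2 : p * p = 1 := by rw [hq0] at e00; linarith
  have hcase : p = -1 := by
    rcases mul_self_eq_one_iff.mp hp2 with h1 | h1
    · exfalso
      apply hB1
      have hs1 : s = 1 := by rw [h1] at hps; linarith
      ext i j
      fin_cases i <;> fin_cases j <;>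
        simp [← hp, ← hq, ← hs, h1, hs1, hq0, h02, h12, h22, h20, h21, h10, Matrix.one_apply]
    · exact h1
  have hs1 : s = -1 := by rw [hcase] at hps; linarith
  ext i j
  fin_cases i <;> fin_cases j <;>
    simp [← hp, ← hq, ← hs, hcase, hs1, hq0, h02, h12, h22, h20, h21, h10, Dmat]

set_option maxHeartbeats 2000000 in
/-- A nonzero harmonic homogeneous cubic on ℝ³ has a real linear factor iff it is fixed
(under pullback) by some element of order 2 of SO(3). -/
theorem reducible_iff_order_two_symmetry (h : MvPolynomial (Fin 3) ℝ)
    (hharm : polyLaplacian h = 0) (hhom : h.IsHomogeneous 3) (hne : h ≠ 0) :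
    (∃ a b c : ℝ, (a ≠ 0 ∨ b ≠ 0 ∨ c ≠ 0) ∧
        (C a * X 0 + C b * X 1 + C c * X 2) ∣ h) ↔
      (∃ A : Matrix (Fin 3) (Fin 3) ℝ, A * Aᵀ = 1 ∧ A.det = 1 ∧
        A ≠ 1 ∧ A * A = 1 ∧
        ∀ v : Fin 3 → ℝ, eval (A⁻¹.mulVec v) h = eval v h) := by
  constructor
  · -- forward: linear factor gives order-2 symmetry
    rintro ⟨a, b, c, habc, t, ht⟩
    -- normalize the linear form
    set r : ℝ := Real.sqrt (a ^ 2 + b ^ 2 + c ^ 2) with hr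
    have hrpos : 0 < r := by
      apply Real.sqrt_pos.mpr
      rcases habc with h' | h' | h' <;> positivity
    have hr2 : r ^ 2 = a ^ 2 + b ^ 2 + c ^ 2 := Real.sq_sqrt (by positivity)
    set n : EuclideanSpace ℝ (Fin 3) := WithLp.toLp 2 ![a / r, b / r, c / r] with hn
    have hunit : ∑ i : Fin 3, n i * n i = 1 := by
      rw [Fin.sum_univ_three]
      simp only [hn, PiLp.toLp_apply, Matrix.cons_val_zero, Matrix.cons_val_one, Matrix.head_cons,
        Matrix.cons_val_two, Matrix.tail_cons]
      field_simp
      nlinarith [hr2]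
    obtain ⟨R, hRRt, hRtR, hR2⟩ := exists_row_matrix n hunit
    set g : MvPolynomial (Fin 3) ℝ := subst Rᵀ h with hg
    have hgharm : polyLaplacian g = 0 := by
      rw [hg, polyLaplacian_subst Rᵀ (by rwa [Matrix.transpose_transpose]) h, hharm, map_zero]
    have hghom : g.IsHomogeneous 3 := subst_isHomogeneous _ hhom
    have hrow : ∀ j, ∑ k, R j k * n k = if j = 2 then 1 else 0 := by
      intro j
      have := congrFun (congrFun hRRt j) 2
      rw [Matrix.mul_apply] at this
      simp only [show ∀ k, R j k * n k = R j k * Rᵀ k 2 from fun k => by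
        rw [Matrix.transpose_apply, hR2]]
      rw [this, Matrix.one_apply]
    have hlin : subst Rᵀ (C a * X 0 + C b * X 1 + C c * X 2) = C r * X 2 := by
      simp only [_root_.map_add, _root_.map_mul, subst_C, subst_X]
      have expand : ∀ i : Fin 3, Rᵀ i = fun j => R j i := fun i => rfl
      have : ∀ j : Fin 3, a * Rᵀ 0 j + b * Rᵀ 1 j + c * Rᵀ 2 j = r * (if j = 2 then 1 else 0) := by
        intro j
        have hj := hrow j
        rw [Fin.sum_univ_three] at hj
        simp only [hn, PiLp.toLp_apply, Matrix.cons_val_zero, Matrix.cons_val_one, Matrix.head_cons,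
          Matrix.cons_val_two, Matrix.tail_cons] at hj
        simp only [Matrix.transpose_apply]
        have : R j 0 * (a / r) + R j 1 * (b / r) + R j 2 * (c / r)
            = (a * R j 0 + b * R j 1 + c * R j 2) / r := by ring
        rw [this] at hj
        rcases eq_or_ne j 2 with hj2 | hj2
        · rw [if_pos hj2] at hj ⊢
          field_simp at hj ⊢
          linarith
        · rw [if_neg hj2] at hj ⊢
          field_simp at hj ⊢
          linarith [hj]
      calc C a * ∑ j, C (Rᵀ 0 j) * X j + C b * ∑ j, C (Rᵀ 1 j) * X j
            + C c * ∑ j, C (Rᵀ 2 j) * X j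
          = ∑ j, C (a * Rᵀ 0 j + b * Rᵀ 1 j + c * Rᵀ 2 j) * X j := by
            simp only [Finset.mul_sum, ← Finset.sum_add_distrib]
            refine Finset.sum_congr rfl fun j _ => ?_
            rw [C_add, C_add, C_mul, C_mul, C_mul]
            ring
        _ = C r * X 2 := by
            simp only [this]
            rw [Fin.sum_univ_three, if_neg (show (0:Fin 3) ≠ 2 by decide),
              if_neg (show (1:Fin 3) ≠ 2 by decide), if_pos rfl]
            simp
    have hgdvd : X 2 ∣ g := by
      rw [hg, ht, _root_.map_mul, hlin]
      exact ⟨C r * subst Rᵀ t, by ring⟩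
    have hDg : subst Dmat g = g := subst_D_eq_self (harmonic_parity hgharm hghom hgdvd)
    have hAA : Rᵀ * Dmat * R * (Rᵀ * Dmat * R) = 1 := by
      calc Rᵀ * Dmat * R * (Rᵀ * Dmat * R)
          = Rᵀ * Dmat * (R * Rᵀ) * Dmat * R := by noncomm_ring
        _ = Rᵀ * (Dmat * Dmat) * R := by rw [hRRt]; noncomm_ring
        _ = 1 := by rw [Dmat_mul_Dmat, Matrix.mul_one, hRtR]
    refine ⟨Rᵀ * Dmat * R, ?_, ?_, ?_, hAA, ?_⟩
    · rw [Matrix.transpose_mul, Matrix.transpose_mul, Matrix.transpose_transpose, Dmat_transpose]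
      calc Rᵀ * Dmat * R * (Rᵀ * (Dmat * R))
          = Rᵀ * Dmat * R * (Rᵀ * Dmat * R) := by noncomm_ring
        _ = 1 := hAA
    · rw [Matrix.det_mul, Matrix.det_mul, Dmat_det, Matrix.det_transpose]
      have hd : R.det * R.det = 1 := by
        have := congrArg Matrix.det hRRt
        rwa [Matrix.det_mul, Matrix.det_transpose, Matrix.det_one] at this
      nlinarith [hd]
    · intro hA1
      have hD1 : R * (Rᵀ * Dmat * R) * Rᵀ = Dmat := by
        calc R * (Rᵀ * Dmat * R) * Rᵀ = (R * Rᵀ) * Dmat * (R * Rᵀ) := by noncomm_ring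
          _ = Dmat := by rw [hRRt]; noncomm_ring
      rw [hA1, Matrix.mul_one, hRRt] at hD1
      have := congrFun (congrFun hD1 0) 0
      simp [Dmat, Matrix.one_apply, Matrix.diagonal] at this
      norm_num at this
    · intro v
      have hAinv : (Rᵀ * Dmat * R)⁻¹ = Rᵀ * Dmat * R := Matrix.inv_eq_right_inv hAA
      rw [hAinv, ← eval_subst]
      have hsubA : subst (Rᵀ * Dmat * R) h = h := by
        have h1 : subst (Rᵀ * Dmat * R) h = subst R (subst Dmat (subst Rᵀ h)) := by
          rw [subst_subst, subst_subst]
          congr 1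
          noncomm_ring
        rw [h1, ← hg, hDg, hg, subst_subst, hRtR, subst_one]
      rw [hsubA]
  · -- reverse: order-2 symmetry gives linear factor
    rintro ⟨A, hAAt, hdetA, hA1, hAA, hinv⟩
    have hAinv : A⁻¹ = A := Matrix.inv_eq_right_inv hAA
    have hsubA : subst A h = h := by
      apply MvPolynomial.funext
      intro v
      rw [eval_subst]
      have := hinv (A.mulVec v)
      rw [hAinv, Matrix.mulVec_mulVec, hAA] at this
      simpa using this.symm
    have hAsym : Aᵀ = A := by
      have h1 : A⁻¹ = Aᵀ := Matrix.inv_eq_right_inv hAAt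
      rw [← h1, hAinv]
    have hAne : A ≠ -1 := by
      intro hA
      rw [hA] at hdetA
      rw [show (-1 : Matrix (Fin 3) (Fin 3) ℝ) = -(1 : Matrix (Fin 3) (Fin 3) ℝ) from rfl,
        Matrix.det_neg, Matrix.det_one] at hdetA
      norm_num at hdetA
    obtain ⟨i0, j0, hij0⟩ : ∃ i j, (A + 1) i j ≠ 0 := by
      by_contra hz
      push_neg at hz
      apply hAne
      ext i j
      have h' := hz i j
      simp only [Matrix.add_apply, Matrix.one_apply] at h'
      simp only [Matrix.neg_apply, Matrix.one_apply]
      linarith [h']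
    set c : Fin 3 → ℝ := fun i => (A + 1) i j0 with hc
    have hAc : A.mulVec c = c := by
      funext i
      have h1 : (A.mulVec c) i = (A * (A + 1)) i j0 := by
        rw [Matrix.mul_apply, Matrix.mulVec]
        rfl
      rw [h1, mul_add, hAA, Matrix.mul_one, add_comm]
    have hcpos : 0 < ∑ i : Fin 3, c i * c i := by
      have hnn : ∀ i : Fin 3, 0 ≤ c i * c i := fun i => mul_self_nonneg _
      have hpos : 0 < c i0 * c i0 := by
        have hne0 : c i0 ≠ 0 := hij0
        rcases hne0.lt_or_gt with hlt | hlt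
        · nlinarith
        · nlinarith
      calc (0:ℝ) < c i0 * c i0 := hpos
        _ ≤ ∑ i : Fin 3, c i * c i :=
            Finset.single_le_sum (fun i _ => hnn i) (Finset.mem_univ i0)
    set r : ℝ := Real.sqrt (∑ i : Fin 3, c i * c i) with hrdef
    have hrpos : 0 < r := Real.sqrt_pos.mpr hcpos
    have hr2 : r ^ 2 = ∑ i : Fin 3, c i * c i := Real.sq_sqrt hcpos.le
    set n : EuclideanSpace ℝ (Fin 3) := WithLp.toLp 2 (fun i => c i / r) with hn
    have hunit : ∑ i : Fin 3, n i * n i = 1 := by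
      have hterm : ∀ i : Fin 3, n i * n i = c i * c i / r ^ 2 := by
        intro i; rw [hn, PiLp.toLp_apply]; ring
      rw [Fintype.sum_congr _ _ hterm, ← Finset.sum_div, ← hr2, div_self (by positivity)]
    obtain ⟨R, hRRt, hRtR, hR2⟩ := exists_row_matrix n hunit
    have hAn : A.mulVec n = n := by
      have hsm : n = r⁻¹ • c := by
        funext i
        simp [hn, div_eq_inv_mul]
      rw [hsm, Matrix.mulVec_smul, hAc]
    set B := R * A * Rᵀ with hB
    have hBsym : Bᵀ = B := by
      rw [hB, Matrix.transpose_mul, Matrix.transpose_mul, Matrix.transpose_transpose, hAsym]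
      noncomm_ring
    have hBB : B * B = 1 := by
      rw [hB]
      calc R * A * Rᵀ * (R * A * Rᵀ) = R * A * (Rᵀ * R) * A * Rᵀ := by noncomm_ring
        _ = R * (A * A) * Rᵀ := by rw [hRtR]; noncomm_ring
        _ = 1 := by rw [hAA, Matrix.mul_one, hRRt]
    have hBdet : B.det = 1 := by
      rw [hB, Matrix.det_mul, Matrix.det_mul, hdetA, Matrix.det_transpose]
      have hd : R.det * R.det = 1 := by
        have := congrArg Matrix.det hRRt
        rwa [Matrix.det_mul, Matrix.det_transpose, Matrix.det_one] at this
      nlinarith [hd]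
    have hB1 : B ≠ 1 := by
      intro hB1
      apply hA1
      have h2 : Rᵀ * B * R = A := by
        rw [hB]
        calc Rᵀ * (R * A * Rᵀ) * R = (Rᵀ * R) * A * (Rᵀ * R) := by noncomm_ring
          _ = A := by rw [hRtR]; noncomm_ring
      rw [hB1, Matrix.mul_one, hRtR] at h2
      exact h2.symm
    have he : ∀ i, B i 2 = if i = 2 then 1 else 0 := by
      intro i
      have hcol : ∀ k, Rᵀ k 2 = n k := fun k => by rw [Matrix.transpose_apply, hR2]
      have h1 : B i 2 = ∑ k, (R * A) i k * n k := by
        rw [hB, Matrix.mul_apply]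
        exact Finset.sum_congr rfl fun k _ => by rw [hcol]
      have h2 : ∑ k, (R * A) i k * n k = ∑ l, R i l * (A.mulVec n) l := by
        simp only [Matrix.mul_apply, Finset.sum_mul]
        rw [Finset.sum_comm]
        refine Finset.sum_congr rfl fun l _ => ?_
        rw [Matrix.mulVec, dotProduct, Finset.mul_sum]
        exact Finset.sum_congr rfl fun k _ => by ring
      have hrow : ∀ j, ∑ k, R j k * n k = if j = 2 then 1 else 0 := by
        intro j
        have hthis := congrFun (congrFun hRRt j) 2
        rw [Matrix.mul_apply] at hthis
        simp only [show ∀ k, R j k * n k = R j k * Rᵀ k 2 from fun k => by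
          rw [Matrix.transpose_apply, hR2]]
        rw [hthis, Matrix.one_apply]
      rw [h1, h2, hAn, hrow]
    have hBD := B_eq_D B hBsym hBB hBdet hB1 he
    have hARDR : A = Rᵀ * Dmat * R := by
      rw [← hBD, hB]
      calc A = (Rᵀ * R) * A * (Rᵀ * R) := by rw [hRtR]; noncomm_ring
        _ = Rᵀ * (R * A * Rᵀ) * R := by noncomm_ring
    set g : MvPolynomial (Fin 3) ℝ := subst Rᵀ h with hg
    have hDg : subst Dmat g = g := by
      have h1 : subst Dmat (subst Rᵀ h) = subst (Rᵀ * Dmat) h := subst_subst _ _ _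
      have h2 : subst Rᵀ (subst A h) = subst (A * Rᵀ) h := subst_subst _ _ _
      have h3 : A * Rᵀ = Rᵀ * Dmat := by
        rw [hARDR]
        calc Rᵀ * Dmat * R * Rᵀ = Rᵀ * Dmat * (R * Rᵀ) := by noncomm_ring
          _ = Rᵀ * Dmat := by rw [hRRt, Matrix.mul_one]
      rw [hg, h1, ← h3, ← h2, hsubA]
    have hghom : g.IsHomogeneous 3 := subst_isHomogeneous _ hhom
    have hpar := parity_of_subst_D hDg
    have hgdvd : X 2 ∣ g := by
      rw [X_dvd_iff_supp]
      intro m hm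
      have hd := supp_deg hghom hm
      have he2 := hpar m hm
      rw [Nat.even_iff] at he2
      omega
    obtain ⟨t, ht⟩ := hgdvd
    have hhRg : h = subst R g := by rw [hg, subst_subst, hRtR, subst_one]
    refine ⟨n 0, n 1, n 2, ?_, ?_⟩
    · by_contra hzero
      push_neg at hzero
      obtain ⟨hz0, hz1, hz2⟩ := hzero
      rw [Fin.sum_univ_three, hz0, hz1, hz2] at hunit
      norm_num at hunit
    · refine ⟨subst R t, ?_⟩
      rw [hhRg, ht, _root_.map_mul]
      rw [subst_X, Fin.sum_univ_three, hR2, hR2, hR2]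
end
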